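/- The goodness-of-fit test is consistent against every stationary ergodic alternative: for every α ∈ (0,1) and every stationary ergodic ρ' ≠ ρ, with ρ'-probability 1 the test Gₙ^α rejects (outputs 1) for all sufficiently large n. -/

import Mathlib

/-!
Under an ergodic law the sliding-window frequency of every cylinder converges almost surely to
its probability. This is Birkhoff's pointwise ergodic theorem for an indicator; for bounded
observables it follows from the maximal ergodic lemma, applied on the invariant set where the
averages have `limsup ≥ c`. Dominated convergence over the summable weights then gives
`d̂((X₁, …, Xₙ), ρ) → d(ρ', ρ)` almost surely under `ρ'`, and `→ 0` almost surely under `ρ`.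
The latter pushes the critical values `γₙ` below `d(ρ', ρ) / 2` eventually, and `d(ρ', ρ) > 0`
because the rational boxes form a π-system generating the σ-algebra of `ℕ → ℝ`, so some box
separates `ρ'` from `ρ`.
-/

open MeasureTheory Filter Topology

/-- Empirical sliding-window frequency of the (cylinder) set `S` of dimension `l`
in the sample given by the first `n` values of `X`. -/
noncomputable def nu (n : ℕ) (X : ℕ → ℝ) (l : ℕ) (S : Set (ℕ → ℝ)) : ℝ :=
  if l ≤ n ∧ 1 ≤ l then
    (∑ i ∈ Finset.range (n - l + 1),
      S.indicator (fun _ => (1 : ℝ)) (fun j => X (i + j))) / (n - l + 1)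
  else 0

/-- A finite-dimensional cylinder with rational endpoints. -/
structure Cylinder where
  dim : ℕ
  dimPos : 0 < dim
  a : Fin dim → ℚ
  b : Fin dim → ℚ

/-- The subset of `ℕ → ℝ` determined by a cylinder (it constrains the first `dim`
coordinates to lie in the corresponding rational-endpoint intervals). -/
def Cylinder.set (C : Cylinder) : Set (ℕ → ℝ) :=
  {x | ∀ j : Fin C.dim, (C.a j : ℝ) ≤ x j.val ∧ x j.val ≤ (C.b j : ℝ)}

/-- Distributional distance between two process measures. -/
noncomputable def dd (w : ℕ → ℝ) (B : ℕ → Cylinder) (μ ν : Measure (ℕ → ℝ)) : ℝ :=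
  ∑' i, w i * |(μ (B i).set).toReal - (ν (B i).set).toReal|

/-- Empirical distributional distance between two finite samples. -/
noncomputable def dhat (w : ℕ → ℝ) (B : ℕ → Cylinder)
    (n : ℕ) (X : ℕ → ℝ) (m : ℕ) (Y : ℕ → ℝ) : ℝ :=
  ∑' i, w i * |nu n X (B i).dim (B i).set - nu m Y (B i).dim (B i).set|

/-- One-sample empirical distributional distance to a known process measure. -/
noncomputable def dhat1 (w : ℕ → ℝ) (B : ℕ → Cylinder)
    (n : ℕ) (X : ℕ → ℝ) (ρ : Measure (ℕ → ℝ)) : ℝ :=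
  ∑' i, w i * |nu n X (B i).dim (B i).set - (ρ (B i).set).toReal|

/-- The left shift on `ℕ → ℝ`. -/
def shift : (ℕ → ℝ) → (ℕ → ℝ) := fun x n => x (n + 1)

/-- Concatenation of a word of length `k` with another word. -/
def conc (k : ℕ) (x y : ℕ → ℝ) : ℕ → ℝ := fun i => if i < k then x i else y (i - k)

open Set Bornology

section MaximalErgodic

variable {α : Type*} {f : α → α} {g : α → ℝ}

noncomputable def birkhoffMax (f : α → α) (g : α → ℝ) : ℕ → α → ℝ
  | 0 => fun _ => 0
  | n + 1 => fun x => max (birkhoffMax f g n x) (birkhoffSum f g (n + 1) x)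

lemma birkhoffMax_nonneg (n : ℕ) (x : α) : 0 ≤ birkhoffMax f g n x := by
  induction n with
  | zero => rfl
  | succ n ih => exact ih.trans (le_max_left _ _)

lemma birkhoffMax_monotone (x : α) : Monotone (birkhoffMax f g · x) :=
  monotone_nat_of_le_succ fun _ => le_max_left _ _

lemma birkhoffSum_le_birkhoffMax {k n : ℕ} (h : k ≤ n) (x : α) :
    birkhoffSum f g k x ≤ birkhoffMax f g n x := by
  cases k with
  | zero => exact birkhoffMax_nonneg n x
  | succ k => exact (le_max_right _ _).trans (birkhoffMax_monotone x h)

lemma birkhoffMax_le_max_add_birkhoffMax_apply (n : ℕ) (x : α) :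
    birkhoffMax f g n x ≤ max (g x + birkhoffMax f g n (f x)) 0 := by
  induction n with
  | zero => exact le_max_right _ _
  | succ n ih =>
    refine max_le (ih.trans (max_le_max_right _ ?_)) ?_
    · gcongr
      exact birkhoffMax_monotone (f x) n.le_succ
    · rw [birkhoffSum_succ']
      exact le_max_of_le_left (by gcongr; exact birkhoffSum_le_birkhoffMax n.le_succ _)

variable [MeasurableSpace α] {μ : Measure α}

lemma measurable_birkhoffSum (hf : Measurable f) (hg : Measurable g) (n : ℕ) :
    Measurable (birkhoffSum f g n) :=
  Finset.measurable_sum _ fun i _ => hg.comp (hf.iterate i)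

lemma measurable_birkhoffMax (hf : Measurable f) (hg : Measurable g) (n : ℕ) :
    Measurable (birkhoffMax f g n) := by
  induction n with
  | zero => exact measurable_const
  | succ n ih => exact ih.max (measurable_birkhoffSum hf hg _)

lemma integrable_birkhoffSum (hf : MeasurePreserving f μ μ) (hg : Integrable g μ) (n : ℕ) :
    Integrable (birkhoffSum f g n) μ :=
  integrable_finsetSum _ fun i _ => (hf.iterate i).integrable_comp_of_integrable hg

lemma integrable_birkhoffMax (hf : MeasurePreserving f μ μ) (hg : Integrable g μ) (n : ℕ) :
    Integrable (birkhoffMax f g n) μ := by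
  induction n with
  | zero => exact integrable_zero _ _ _
  | succ n ih => exact ih.sup (integrable_birkhoffSum hf hg _)

theorem setIntegral_birkhoffMax_pos_nonneg (hf : MeasurePreserving f μ μ) (hg : Measurable g)
    (hgi : Integrable g μ) (n : ℕ) : 0 ≤ ∫ x in {x | 0 < birkhoffMax f g n x}, g x ∂μ := by
  set M := birkhoffMax f g n
  set E := {x | 0 < M x}
  have hE : MeasurableSet E :=
    measurableSet_lt measurable_const (measurable_birkhoffMax hf.measurable hg n)
  -- On `E`, `M ≤ max (g + M ∘ f) 0` reduces to `M - M ∘ f ≤ g`; off `E`, `M = 0 ≤ M ∘ f`.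
  have hpointwise : ∀ x, M x - M (f x) ≤ E.indicator g x := by
    intro x
    by_cases hx : x ∈ E
    · rw [indicator_of_mem hx]
      have := (le_max_iff.1 (birkhoffMax_le_max_add_birkhoffMax_apply (f := f) (g := g) n x))
        |>.resolve_right (not_le.2 hx)
      linarith
    · have hx0 : M x = 0 := le_antisymm (not_lt.1 hx) (birkhoffMax_nonneg n x)
      rw [indicator_of_notMem hx, hx0, zero_sub, neg_nonpos]
      exact birkhoffMax_nonneg n (f x)
  have hMi : Integrable M μ := integrable_birkhoffMax hf hgi n
  have hMfi : Integrable (fun x => M (f x)) μ := hf.integrable_comp_of_integrable hMi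
  have hinv : ∫ x, M (f x) ∂μ = ∫ x, M x ∂μ := by
    conv_rhs => rw [← hf.map_eq]
    exact (integral_map hf.measurable.aemeasurable
      (measurable_birkhoffMax hf.measurable hg n).aestronglyMeasurable).symm
  calc (0 : ℝ) = ∫ x, (M x - M (f x)) ∂μ := by rw [integral_sub hMi hMfi, hinv, sub_self]
    _ ≤ ∫ x, E.indicator g x ∂μ := integral_mono (hMi.sub hMfi) (hgi.indicator hE) hpointwise
    _ = ∫ x in E, g x ∂μ := integral_indicator hE

theorem integral_nonneg_of_ae_exists_birkhoffSum_pos (hf : MeasurePreserving f μ μ)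
    (hg : Measurable g) (hgi : Integrable g μ)
    (hpos : ∀ᵐ x ∂μ, ∃ n, 0 < birkhoffSum f g n x) : 0 ≤ ∫ x, g x ∂μ := by
  set E : ℕ → Set α := fun n => {x | 0 < birkhoffMax f g n x}
  have hcover : ⋃ n, E n =ᵐ[μ] (univ : Set α) := by
    filter_upwards [hpos] with x ⟨n, hn⟩
    exact eq_true (mem_iUnion.2 ⟨n, hn.trans_le (birkhoffSum_le_birkhoffMax le_rfl x)⟩)
  have hlim := tendsto_setIntegral_of_monotone (s := E)
    (fun n => measurableSet_lt measurable_const (measurable_birkhoffMax hf.measurable hg n))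
    (fun m n hmn x hx => hx.trans_le (birkhoffMax_monotone x hmn)) hgi.integrableOn
  rw [setIntegral_congr_set hcover, setIntegral_univ] at hlim
  exact ge_of_tendsto' hlim fun n => setIntegral_birkhoffMax_pos_nonneg hf hg hgi n

end MaximalErgodic

lemma Filter.Frequently.lt_of_tendsto_sub {ι : Type*} {l : Filter ι} {u v : ι → ℝ}
    {a b : ℝ} (hv : ∃ᶠ n in l, b < v n) (huv : Tendsto (fun n => u n - v n) l (𝓝 0))
    (hab : a < b) : ∃ᶠ n in l, a < u n := by
  have hclose : ∀ᶠ n in l, a - b < u n - v n := huv.eventually (lt_mem_nhds (sub_neg.2 hab))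
  exact hv.mp (hclose.mono fun n h₁ h₂ => by linarith)

section PointwiseErgodic

variable {α : Type*} {f : α → α} {g : α → ℝ}

/-- The points at which `limsup birkhoffAverage ℝ f g n x ≥ c`, written without `limsup`. -/
def limsupBirkhoffAverageGE (f : α → α) (g : α → ℝ) (c : ℝ) : Set α :=
  {x | ∀ q : ℚ, (q : ℝ) < c → ∃ᶠ n in atTop, (q : ℝ) < birkhoffAverage ℝ f g n x}

lemma preimage_limsupBirkhoffAverageGE (hg : IsBounded (range g)) (c : ℝ) :
    f ⁻¹' limsupBirkhoffAverageGE f g c = limsupBirkhoffAverageGE f g c := by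
  have hshift (x : α) := tendsto_birkhoffAverage_apply_sub_birkhoffAverage' (𝕜 := ℝ) hg f x
  ext x
  simp only [mem_preimage, limsupBirkhoffAverageGE, mem_ofPred_eq]
  refine ⟨fun h q hq => ?_, fun h q hq => ?_⟩ <;> obtain ⟨q', hqq', hq'c⟩ := exists_rat_btwn hq
  · exact (h q' hq'c).lt_of_tendsto_sub (by simpa using (hshift x).neg) hqq'
  · exact (h q' hq'c).lt_of_tendsto_sub (hshift x) hqq'

variable [MeasurableSpace α] {μ : Measure α}

lemma measurableSet_limsupBirkhoffAverageGE (hf : Measurable f) (hg : Measurable g) (c : ℝ) :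
    MeasurableSet (limsupBirkhoffAverageGE f g c) := by
  simp only [limsupBirkhoffAverageGE, frequently_atTop]
  refine measurableSet_setOfPred.2 (Measurable.forall fun q => measurable_const.imp ?_)
  refine Measurable.forall fun N => Measurable.exists fun n => measurable_const.and ?_
  exact measurableSet_setOfPred.1 (measurableSet_lt measurable_const
    ((measurable_birkhoffSum hf hg n).const_smul (n : ℝ)⁻¹))

lemma Ergodic.ae_eventually_birkhoffAverage_lt [IsProbabilityMeasure μ] (hf : Ergodic f μ)
    (hg : Measurable g) (hgb : IsBounded (range g)) {c : ℝ} (hc : ∫ x, g x ∂μ < c) :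
    ∀ᵐ x ∂μ, ∀ᶠ n in atTop, birkhoffAverage ℝ f g n x < c := by
  rcases hf.ae_empty_or_univ (measurableSet_limsupBirkhoffAverageGE hf.measurable hg c)
    (preimage_limsupBirkhoffAverageGE hgb c) with hnull | hconull
  · filter_upwards [measure_eq_zero_iff_ae_notMem.1 (ae_eq_empty.1 hnull)] with x hx
    simp only [limsupBirkhoffAverageGE, mem_ofPred_eq, not_forall, not_frequently,
      not_lt] at hx
    obtain ⟨q, hqc, hq⟩ := hx
    exact hq.mono fun n hn => hn.trans_lt hqc
  -- Otherwise averages exceed a level `b ∈ (∫ g, c)` infinitely often almost everywhere, so the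
  -- maximal ergodic lemma applied to `g - b` forces `∫ g ≥ b`.
  exfalso
  obtain ⟨b, hb, hbc⟩ := exists_rat_btwn hc
  obtain ⟨C, hC⟩ := isBounded_iff_forall_norm_le.1 hgb
  have hgi : Integrable g μ :=
    .of_bound hg.aestronglyMeasurable C (ae_of_all _ fun x => hC _ (mem_range_self x))
  have hpos : ∀ᵐ x ∂μ, ∃ n, 0 < birkhoffSum f (fun y => g y - b) n x := by
    filter_upwards [hconull.mem_iff] with x hx
    obtain ⟨n, hbn, hn⟩ := ((hx.2 trivial) b hbc |>.and_eventually (eventually_gt_atTop 0)).exists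
    refine ⟨n, ?_⟩
    have hsum : birkhoffSum f (fun y => g y - b) n x = n * (birkhoffAverage ℝ f g n x - b) := by
      simp [birkhoffAverage, birkhoffSum, mul_sub, hn.ne']
    rw [hsum]
    exact mul_pos (Nat.cast_pos.2 hn) (sub_pos.2 hbn)
  have := integral_nonneg_of_ae_exists_birkhoffSum_pos (g := fun y => g y - b)
    hf.toMeasurePreserving (hg.sub measurable_const) (hgi.sub (integrable_const _)) hpos
  rw [integral_sub hgi (integrable_const _), integral_const, probReal_univ, one_smul] at this
  linarith

theorem Ergodic.ae_tendsto_birkhoffAverage [IsProbabilityMeasure μ] (hf : Ergodic f μ)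
    (hg : Measurable g) (hgb : IsBounded (range g)) :
    ∀ᵐ x ∂μ, Tendsto (birkhoffAverage ℝ f g · x) atTop (𝓝 (∫ x, g x ∂μ)) := by
  have hupper : ∀ᵐ x ∂μ, ∀ q : ℚ, ∫ x, g x ∂μ < q →
      ∀ᶠ n in atTop, birkhoffAverage ℝ f g n x < q :=
    ae_all_iff.2 fun q => eventually_imp_distrib_left.2 fun hq =>
      hf.ae_eventually_birkhoffAverage_lt hg hgb hq
  have hlower : ∀ᵐ x ∂μ, ∀ q : ℚ, (q : ℝ) < ∫ x, g x ∂μ →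
      ∀ᶠ n in atTop, (q : ℝ) < birkhoffAverage ℝ f g n x := by
    refine ae_all_iff.2 fun q => eventually_imp_distrib_left.2 fun hq => ?_
    have hneg := hf.ae_eventually_birkhoffAverage_lt (c := -q) hg.neg
      (hgb.neg.subset (range_subset_iff.2 fun x => by simp))
      (by simpa [integral_neg] using neg_lt_neg hq)
    filter_upwards [hneg] with x hx
    simpa [birkhoffAverage_neg] using hx
  filter_upwards [hupper, hlower] with x hu hl
  refine tendsto_order.2 ⟨fun a ha => ?_, fun a ha => ?_⟩
  · obtain ⟨q, haq, hq⟩ := exists_rat_btwn ha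
    exact (hl q hq).mono fun n hn => haq.trans hn
  · obtain ⟨q, hq, hqa⟩ := exists_rat_btwn ha
    exact (hu q hq).mono fun n hn => hn.trans hqa

end PointwiseErgodic

namespace Cylinder

lemma measurableSet (C : Cylinder) : MeasurableSet C.set :=
  measurableSet_setOfPred.2 <| Measurable.forall fun _ =>
    (measurableSet_setOfPred.1 (measurableSet_le measurable_const (measurable_pi_apply _))).and
      (measurableSet_setOfPred.1 (measurableSet_le (measurable_pi_apply _) measurable_const))

lemma mem_set_iff (C : Cylinder) (x : ℕ → ℝ) :
    x ∈ C.set ↔ ∀ j (h : j < C.dim), (C.a ⟨j, h⟩ : ℝ) ≤ x j ∧ x j ≤ C.b ⟨j, h⟩ :=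
  ⟨fun hx j h => hx ⟨j, h⟩, fun hx j => hx j j.2⟩

def inter (C₁ C₂ : Cylinder) : Cylinder where
  dim := max C₁.dim C₂.dim
  dimPos := lt_max_of_lt_left C₁.dimPos
  a j :=
    if h₁ : j.1 < C₁.dim then
      if h₂ : j.1 < C₂.dim then max (C₁.a ⟨j, h₁⟩) (C₂.a ⟨j, h₂⟩) else C₁.a ⟨j, h₁⟩
    else C₂.a ⟨j, by omega⟩
  b j :=
    if h₁ : j.1 < C₁.dim then
      if h₂ : j.1 < C₂.dim then min (C₁.b ⟨j, h₁⟩) (C₂.b ⟨j, h₂⟩) else C₁.b ⟨j, h₁⟩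
    else C₂.b ⟨j, by omega⟩

lemma inter_set (C₁ C₂ : Cylinder) : (C₁.inter C₂).set = C₁.set ∩ C₂.set := by
  ext x
  simp only [mem_inter_iff, mem_set_iff, inter]
  refine ⟨fun h => ⟨fun j hj => ?_, fun j hj => ?_⟩, fun ⟨h₁, h₂⟩ j hj => ?_⟩
  · have := h j (lt_max_of_lt_left hj)
    split_ifs at this <;> push_cast at this <;> grind
  · have := h j (lt_max_of_lt_right hj)
    split_ifs at this <;> push_cast at this <;> grind
  · split_ifs <;> push_cast <;> grind

def lowerBox (n M : ℕ) (q : ℚ) : Cylinder where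
  dim := n + 1
  dimPos := n.succ_pos
  a _ := -M
  b j := if j.1 = n then q else M

end Cylinder

lemma isPiSystem_range_cylinderSet : IsPiSystem (range Cylinder.set) := by
  rintro _ ⟨C₁, rfl⟩ _ ⟨C₂, rfl⟩ -
  exact ⟨C₁.inter C₂, C₁.inter_set C₂⟩

lemma preimage_eval_Iic_eq_iUnion (n : ℕ) (q : ℚ) :
    (fun x : ℕ → ℝ => x n) ⁻¹' Iic (q : ℝ) = ⋃ M : ℕ, (Cylinder.lowerBox n M q).set := by
  ext x
  simp only [mem_preimage, mem_Iic, mem_iUnion, Cylinder.mem_set_iff, Cylinder.lowerBox]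
  refine ⟨fun hx => ?_, fun ⟨M, hM⟩ => by simpa using (hM n n.lt_succ_self).2⟩
  obtain ⟨M, hM⟩ := exists_nat_ge (∑ j ∈ Finset.range (n + 1), |x j|)
  refine ⟨M, fun j hj => ?_⟩
  have hxj : |x j| ≤ M := (Finset.single_le_sum (fun i _ => abs_nonneg (x i))
    (Finset.mem_range.2 hj)).trans hM
  split_ifs with hjn
  · subst hjn
    push_cast
    exact ⟨by linarith [neg_abs_le (x j)], hx⟩
  · push_cast
    exact abs_le.1 hxj

lemma measurableSpace_eq_generateFrom_cylinderSet :
    (inferInstance : MeasurableSpace (ℕ → ℝ)) = .generateFrom (range Cylinder.set) := by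
  refine le_antisymm (iSup_le fun n => ?_)
    (MeasurableSpace.generateFrom_le (forall_mem_range.2 Cylinder.measurableSet))
  rw [BorelSpace.measurable_eq (α := ℝ), Real.borel_eq_generateFrom_Iic_rat,
    MeasurableSpace.comap_generateFrom]
  refine MeasurableSpace.generateFrom_le ?_
  rintro _ ⟨_, hs, rfl⟩
  obtain ⟨q, rfl⟩ := by simpa using hs
  rw [preimage_eval_Iic_eq_iUnion]
  exact .iUnion fun M => MeasurableSpace.measurableSet_generateFrom ⟨_, rfl⟩

lemma MeasureTheory.Measure.ext_of_cylinder {μ ν : Measure (ℕ → ℝ)} [IsProbabilityMeasure μ]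
    [IsProbabilityMeasure ν] (h : ∀ C : Cylinder, μ C.set = ν C.set) : μ = ν :=
  ext_of_generate_finite _ measurableSpace_eq_generateFrom_cylinderSet
    isPiSystem_range_cylinderSet (forall_mem_range.2 h) (by simp)

lemma shift_iterate_apply (i : ℕ) (X : ℕ → ℝ) (j : ℕ) : shift^[i] X j = X (i + j) := by
  induction i generalizing X with
  | zero => simp
  | succ i ih => rw [Function.iterate_succ_apply, ih, shift, Nat.add_right_comm, Nat.add_assoc]

lemma nu_eq_birkhoffAverage {n l : ℕ} (hl : 1 ≤ l) (hn : l ≤ n) (X : ℕ → ℝ)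
    (S : Set (ℕ → ℝ)) :
    nu n X l S = birkhoffAverage ℝ shift (S.indicator fun _ => 1) (n - l + 1) X := by
  have hcast : ((n - l + 1 : ℕ) : ℝ) = n - l + 1 := by push_cast [hn]; ring
  simp only [nu, if_pos (And.intro hn hl), birkhoffAverage, birkhoffSum, hcast, smul_eq_mul,
    div_eq_inv_mul]
  congr 2 with i
  congr 1 with j
  exact (shift_iterate_apply i X j).symm

lemma nu_mem_Icc (n : ℕ) (X : ℕ → ℝ) (l : ℕ) (S : Set (ℕ → ℝ)) : nu n X l S ∈ Icc (0 : ℝ) 1 := by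
  unfold nu
  split_ifs with h
  · have hN : (0 : ℝ) < n - l + 1 := by
      have : (l : ℝ) ≤ n := by exact_mod_cast h.1
      linarith
    have hsum : ∑ i ∈ Finset.range (n - l + 1), S.indicator (fun _ => (1 : ℝ)) (fun j => X (i + j))
        ≤ n - l + 1 := by
      calc _ ≤ ∑ i ∈ Finset.range (n - l + 1), (1 : ℝ) :=
            Finset.sum_le_sum fun i _ => indicator_le_self' (fun _ _ => zero_le_one) _
        _ = n - l + 1 := by simp [h.1]
    exact ⟨div_nonneg (Finset.sum_nonneg fun i _ => indicator_nonneg (fun _ _ => zero_le_one) _)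
      hN.le, (div_le_one hN).2 hsum⟩
  · exact ⟨le_rfl, zero_le_one⟩

lemma measurable_nu (n l : ℕ) {S : Set (ℕ → ℝ)} (hS : MeasurableSet S) :
    Measurable (fun X : ℕ → ℝ => nu n X l S) := by
  unfold nu
  split_ifs
  · exact (Finset.measurable_sum _ fun i _ => (measurable_const.indicator hS).comp
      (measurable_pi_lambda _ fun j => measurable_pi_apply (i + j))).div_const _
  · exact measurable_const

theorem Ergodic.ae_tendsto_nu {μ : Measure (ℕ → ℝ)} [IsProbabilityMeasure μ]
    (hμ : Ergodic shift μ) (C : Cylinder) :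
    ∀ᵐ X ∂μ, Tendsto (fun n => nu n X C.dim C.set) atTop (𝓝 (μ C.set).toReal) := by
  have hbdd : IsBounded (range (C.set.indicator fun _ => (1 : ℝ))) :=
    (Metric.isBounded_Icc (0 : ℝ) 1).subset (range_subset_iff.2 fun X =>
      ⟨indicator_nonneg (fun _ _ => zero_le_one) X, indicator_le_self' (fun _ _ => zero_le_one) X⟩)
  have hlim := hμ.ae_tendsto_birkhoffAverage (measurable_const.indicator C.measurableSet) hbdd
  rw [integral_indicator_const _ C.measurableSet, smul_eq_mul, mul_one] at hlim
  filter_upwards [hlim] with X hX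
  refine (hX.comp ((tendsto_add_atTop_nat 1).comp (tendsto_sub_atTop_nat C.dim))).congr' ?_
  filter_upwards [eventually_ge_atTop C.dim] with n hn
  exact (nu_eq_birkhoffAverage C.dimPos hn X C.set).symm

lemma norm_mul_abs_sub_le {c a b : ℝ} (hc : 0 ≤ c) (ha : a ∈ Icc (0 : ℝ) 1)
    (hb : b ∈ Icc (0 : ℝ) 1) : ‖c * |a - b|‖ ≤ c := by
  rw [Real.norm_of_nonneg (by positivity)]
  exact mul_le_of_le_one_right hc (abs_sub_le_of_nonneg_of_le ha.1 ha.2 hb.1 hb.2)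

section EmpiricalDistance

variable {w : ℕ → ℝ} {B : ℕ → Cylinder} {ρ : Measure (ℕ → ℝ)}

lemma dhat1_nonneg (hw : ∀ i, 0 ≤ w i) (n : ℕ) (X : ℕ → ℝ) : 0 ≤ dhat1 w B n X ρ :=
  tsum_nonneg fun i => mul_nonneg (hw i) (abs_nonneg _)

variable [IsProbabilityMeasure ρ]

lemma toReal_measure_mem_Icc (s : Set (ℕ → ℝ)) : (ρ s).toReal ∈ Icc (0 : ℝ) 1 :=
  ⟨ENNReal.toReal_nonneg, measureReal_le_one⟩

lemma measurable_dhat1 (hw : ∀ i, 0 ≤ w i) (hsum : Summable w) (n : ℕ) :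
    Measurable (fun X => dhat1 w B n X ρ) := by
  refine measurable_of_tendsto_metrizable (f := fun N X => ∑ i ∈ Finset.range N,
    w i * |nu n X (B i).dim (B i).set - (ρ (B i).set).toReal|) (fun N => ?_) ?_
  · exact Finset.measurable_sum _ fun i _ =>
      (((measurable_nu n _ (B i).measurableSet).sub measurable_const).abs).const_mul (w i)
  · refine tendsto_pi_nhds.2 fun X => (Summable.hasSum ?_).tendsto_sum_nat
    exact hsum.of_norm_bounded fun i =>
      norm_mul_abs_sub_le (hw i) (nu_mem_Icc _ _ _ _) (toReal_measure_mem_Icc _)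

theorem Ergodic.ae_tendsto_dhat1 {μ : Measure (ℕ → ℝ)} [IsProbabilityMeasure μ]
    (hμ : Ergodic shift μ) (hw : ∀ i, 0 ≤ w i) (hsum : Summable w) :
    ∀ᵐ X ∂μ, Tendsto (fun n => dhat1 w B n X ρ) atTop (𝓝 (dd w B μ ρ)) := by
  filter_upwards [ae_all_iff.2 fun i => hμ.ae_tendsto_nu (B i)] with X hX
  refine tendsto_tsum_of_dominated_convergence hsum (fun i => ?_) (.of_forall fun n i =>
    norm_mul_abs_sub_le (hw i) (nu_mem_Icc _ _ _ _) (toReal_measure_mem_Icc _))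
  exact ((hX i).sub tendsto_const_nhds).abs.const_mul (w i)

end EmpiricalDistance

lemma dd_self (w : ℕ → ℝ) (B : ℕ → Cylinder) (μ : Measure (ℕ → ℝ)) : dd w B μ μ = 0 := by
  simp [dd]

lemma dd_pos {w : ℕ → ℝ} (hw : ∀ i, 0 < w i) (hsum : Summable w) {B : ℕ → Cylinder}
    (hB : Function.Surjective B) {μ ν : Measure (ℕ → ℝ)} [IsProbabilityMeasure μ]
    [IsProbabilityMeasure ν] (hne : μ ≠ ν) : 0 < dd w B μ ν := by
  obtain ⟨C, hC⟩ : ∃ C : Cylinder, μ C.set ≠ ν C.set := by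
    by_contra! h
    exact hne (Measure.ext_of_cylinder h)
  obtain ⟨i, rfl⟩ := hB C
  refine (hsum.of_norm_bounded fun j => norm_mul_abs_sub_le (hw j).le
    (toReal_measure_mem_Icc _) (toReal_measure_mem_Icc _)).tsum_pos
    (fun j => mul_nonneg (hw j).le (abs_nonneg _)) i (mul_pos (hw i) ?_)
  rw [abs_pos, sub_ne_zero]
  exact (ENNReal.toReal_eq_toReal_iff' (measure_ne_top _ _) (measure_ne_top _ _)).not.2 hC

section CriticalValue

variable {Ω : Type*} [MeasurableSpace Ω] {μ : Measure Ω} [IsProbabilityMeasure μ] {α : ℝ}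

lemma sInf_setOf_measure_le_le {T : Ω → ℝ} (hT : ∀ x, 0 ≤ T x) (hα : α < 1) {δ : ℝ}
    (hδ : μ {x | δ ≤ T x} ≤ ENNReal.ofReal α) :
    sInf {δ' : ℝ | μ {x | δ' ≤ T x} ≤ ENNReal.ofReal α} ≤ δ := by
  refine csInf_le ⟨0, fun δ' hδ' => ?_⟩ hδ
  by_contra! hneg
  have huniv : {x | δ' ≤ T x} = univ := eq_univ_of_forall fun x => hneg.le.trans (hT x)
  rw [mem_ofPred_eq, huniv, measure_univ] at hδ'
  exact (ENNReal.ofReal_lt_one.2 hα).not_ge hδ'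

lemma eventually_sInf_setOf_measure_le_le {T : ℕ → Ω → ℝ}
    (hTm : ∀ n, AEStronglyMeasurable (T n) μ) (hT : ∀ n x, 0 ≤ T n x)
    (hlim : ∀ᵐ x ∂μ, Tendsto (T · x) atTop (𝓝 0)) (hα : α ∈ Ioo 0 1) {δ : ℝ} (hδ : 0 < δ) :
    ∀ᶠ n in atTop, sInf {δ' : ℝ | μ {x | δ' ≤ T n x} ≤ ENNReal.ofReal α} ≤ δ := by
  have hsmall := tendstoInMeasure_iff_dist.1 (tendstoInMeasure_of_tendsto_ae hTm hlim) δ hδ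
  filter_upwards [hsmall.eventually_lt_const (ENNReal.ofReal_pos.2 hα.1)] with n hn
  refine sInf_setOf_measure_le_le (hT n) hα.2 (le_of_eq_of_le ?_ hn.le)
  simp only [Real.dist_eq, sub_zero, abs_of_nonneg (hT n _)]

end CriticalValue

/-- The goodness-of-fit test is consistent: under any stationary ergodic
alternative `ρ' ≠ ρ`, almost surely the test rejects for all large `n`. -/
theorem stmt10 (w : ℕ → ℝ) (hw : ∀ i, 0 < w i) (hsum : Summable w)
    (B : ℕ → Cylinder) (hB : Function.Surjective B)
    (ρ ρ' : Measure (ℕ → ℝ)) [IsProbabilityMeasure ρ] [IsProbabilityMeasure ρ']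
    (hρ : Ergodic shift ρ) (hρ' : Ergodic shift ρ') (hne : ρ' ≠ ρ)
    (α : ℝ) (hα : α ∈ Set.Ioo (0 : ℝ) 1) :
    ∀ᵐ x ∂ρ', ∀ᶠ n in atTop,
      sInf {δ : ℝ | ρ {y | δ ≤ dhat1 w B n y ρ} ≤ ENNReal.ofReal α}
        ≤ dhat1 w B n x ρ := by
  have hw₀ (i : ℕ) : 0 ≤ w i := (hw i).le
  have hgap : 0 < dd w B ρ' ρ := dd_pos hw hsum hB hne
  have hnull : ∀ᵐ y ∂ρ, Tendsto (fun n => dhat1 w B n y ρ) atTop (𝓝 0) := by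
    simpa only [dd_self] using hρ.ae_tendsto_dhat1 (B := B) (ρ := ρ) hw₀ hsum
  have hcrit := eventually_sInf_setOf_measure_le_le
    (fun n => (measurable_dhat1 hw₀ hsum n).aestronglyMeasurable) (fun n => dhat1_nonneg hw₀ n)
    hnull hα (half_pos hgap)
  filter_upwards [hρ'.ae_tendsto_dhat1 (B := B) (ρ := ρ) hw₀ hsum] with x hx
  filter_upwards [hcrit, hx.eventually_const_lt (half_lt_self hgap)] with n hγ hlarge
  exact hγ.trans hlarge.le
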